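/- arXiv:0712.4396 — 3 statements merged into one kernel-verified Lean document; each statement's English description precedes it below -/
import Mathlib

section
/- Under the stated abstract setting, if λ_m < λ_{m+1}, then Σ_{i=1}^m ρ_i ≤ Σ_{i=1}^m Λ_i/(λ_{m+1} − λ_i). -/
/-!
Fix one symmetric `B` and split `B u_i = p_i + φ_i` with `p_i = ∑_{j ≤ m} ⟪u_j, B u_i⟫ u_j`.
Since `⟪u_j, [A, B] u_i⟫ = (λ_j - λ_i) ⟪u_j, B u_i⟫`, the `p_i`-part of
`Re ⟪[A, B] u_i, B u_i⟫` is `∑_j (λ_j - λ_i) |⟪u_j, B u_i⟫|²`; as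
`|⟪u_j, B u_i⟫| = |⟪u_i, B u_j⟫|`, it is antisymmetric in `(i, j)` and cancels in the sum
over `i`. The `φ_i`-part `x` equals `⟪A φ_i, φ_i⟫ - λ_i ‖φ_i‖²`, so Rayleigh–Ritz and
Cauchy–Schwarz give `δ ‖φ_i‖² ≤ x ≤ ‖[A, B] u_i‖ ‖φ_i‖` with `δ = λ_{m+1} - λ_i > 0`,
whence `x ≤ ‖[A, B] u_i‖² / δ`.
-/

open scoped ComplexInnerProductSpace InnerProductSpace
open RCLike

section

variable {𝕜 E ι : Type*} [RCLike 𝕜] [NormedAddCommGroup E] [InnerProductSpace 𝕜 E]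

theorem Orthonormal.inner_sub_sum_inner_smul [Fintype ι] {v : ι → E} (hv : Orthonormal 𝕜 v)
    (x : E) (i : ι) : ⟪v i, x - ∑ j, ⟪v j, x⟫_𝕜 • v j⟫_𝕜 = 0 := by
  rw [inner_sub_right, hv.inner_right_fintype, sub_self]

theorem inner_sum_smul_eq_zero {s : Finset ι} {v : ι → E} (c : ι → 𝕜) {y : E}
    (hy : ∀ j ∈ s, ⟪v j, y⟫_𝕜 = 0) : ⟪∑ j ∈ s, c j • v j, y⟫_𝕜 = 0 := by
  rw [sum_inner]
  exact Finset.sum_eq_zero fun j hj => by rw [inner_smul_left, hy j hj, mul_zero]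

theorem le_sq_div_of_mul_sq_le_of_le_mul {δ p x a : ℝ} (hδ : 0 < δ) (hlow : δ * p ^ 2 ≤ x)
    (hup : x ≤ a * p) : x ≤ a ^ 2 / δ := by
  rw [le_div_iff₀ hδ]
  nlinarith [sq_nonneg (a - δ * p)]

theorem Finset.sum_sum_sub_mul_eq_zero_of_symm (s : Finset ι) (μ : ι → ℝ)
    {f : ι → ι → ℝ} (hf : ∀ i j, f i j = f j i) : ∑ i ∈ s, ∑ j ∈ s, (μ j - μ i) * f i j = 0 := by
  simp only [sub_mul, Finset.sum_sub_distrib]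
  rw [Finset.sum_comm, sub_eq_zero]
  simp only [hf]

namespace LinearMap.IsSymmetric

variable {A : E →ₗ[𝕜] E}

theorem inner_commutator_apply_of_eigen (hA : A.IsSymmetric) (B : E →ₗ[𝕜] E) {v w : E}
    {μ ν : ℝ} (hv : A v = (μ : 𝕜) • v) (hw : A w = (ν : 𝕜) • w) :
    ⟪w, (A ∘ₗ B - B ∘ₗ A) v⟫_𝕜 = ((ν - μ : ℝ) : 𝕜) * ⟪w, B v⟫_𝕜 := by
  rw [sub_apply, comp_apply, comp_apply, inner_sub_right, ← hA, hw, hv, map_smul,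
    inner_smul_left, inner_smul_right, conj_ofReal]
  push_cast
  ring

variable [Fintype ι] {v : ι → E} {μ : ι → ℝ}

theorem re_inner_commutator_apply_sum_inner_smul (hA : A.IsSymmetric) (B : E →ₗ[𝕜] E)
    (heig : ∀ i, A (v i) = (μ i : 𝕜) • v i) (i : ι) :
    re ⟪(A ∘ₗ B - B ∘ₗ A) (v i), ∑ j, ⟪v j, B (v i)⟫_𝕜 • v j⟫_𝕜
      = ∑ j, (μ j - μ i) * ‖⟪v j, B (v i)⟫_𝕜‖ ^ 2 := by
  rw [inner_sum, map_sum]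
  refine Finset.sum_congr rfl fun j _ => ?_
  rw [inner_smul_right, ← inner_conj_symm ((A ∘ₗ B - B ∘ₗ A) (v i)) (v j),
    hA.inner_commutator_apply_of_eigen B (heig i) (heig j), map_mul (starRingEnd 𝕜),
    conj_ofReal, mul_left_comm, RCLike.mul_conj, ← ofReal_pow, ← ofReal_mul, ofReal_re]

theorem inner_commutator_apply_of_orthogonal (hA : A.IsSymmetric) (B : E →ₗ[𝕜] E)
    (heig : ∀ i, A (v i) = (μ i : 𝕜) • v i) (i : ι) (c : ι → 𝕜) {φ : E}
    (hφ : ∀ j, ⟪v j, φ⟫_𝕜 = 0) (hB : B (v i) = ∑ j, c j • v j + φ) :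
    ⟪(A ∘ₗ B - B ∘ₗ A) (v i), φ⟫_𝕜 = ⟪A φ, φ⟫_𝕜 - (μ i : 𝕜) * ⟪φ, φ⟫_𝕜 := by
  have hAφ : ∀ j, ⟪v j, A φ⟫_𝕜 = 0 := fun j => by
    rw [← hA, heig, inner_smul_left, hφ, mul_zero]
  rw [sub_apply, comp_apply, comp_apply, inner_sub_left, hA, heig, map_smul, inner_smul_left,
    conj_ofReal, hB, inner_add_left, inner_add_left,
    inner_sum_smul_eq_zero c fun j _ => hAφ j, inner_sum_smul_eq_zero c fun j _ => hφ j,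
    zero_add, zero_add, ← hA]

theorem re_inner_commutator_apply_le (hA : A.IsSymmetric) (B : E →ₗ[𝕜] E)
    (hv : Orthonormal 𝕜 v) (heig : ∀ i, A (v i) = (μ i : 𝕜) • v i) {Λ : ℝ}
    (hRR : ∀ φ, (∀ j, ⟪φ, v j⟫_𝕜 = 0) → Λ * ‖φ‖ ^ 2 ≤ re ⟪A φ, φ⟫_𝕜) {i : ι}
    (hi : μ i < Λ) :
    re ⟪(A ∘ₗ B - B ∘ₗ A) (v i), B (v i)⟫_𝕜
      ≤ ∑ j, (μ j - μ i) * ‖⟪v j, B (v i)⟫_𝕜‖ ^ 2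
        + ‖(A ∘ₗ B - B ∘ₗ A) (v i)‖ ^ 2 / (Λ - μ i) := by
  set T := (A ∘ₗ B - B ∘ₗ A) (v i)
  set p := ∑ j, ⟪v j, B (v i)⟫_𝕜 • v j
  set φ := B (v i) - p
  have hφ : ∀ j, ⟪v j, φ⟫_𝕜 = 0 := hv.inner_sub_sum_inner_smul (B (v i))
  have hTφ : re ⟪T, φ⟫_𝕜 = re ⟪A φ, φ⟫_𝕜 - μ i * ‖φ‖ ^ 2 := by
    rw [hA.inner_commutator_apply_of_orthogonal B heig i _ hφ (add_sub_cancel p _).symm,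
      inner_self_eq_norm_sq_to_K, map_sub, ← ofReal_pow, re_ofReal_mul, ofReal_re]
  have hlow : (Λ - μ i) * ‖φ‖ ^ 2 ≤ re ⟪T, φ⟫_𝕜 := by
    have := hRR φ fun j => inner_eq_zero_symm.mp (hφ j)
    linarith
  have hsplit : ⟪T, B (v i)⟫_𝕜 = ⟪T, p⟫_𝕜 + ⟪T, φ⟫_𝕜 := by
    rw [← inner_add_right, add_sub_cancel]
  rw [hsplit, map_add, hA.re_inner_commutator_apply_sum_inner_smul B heig i]
  exact add_le_add_right (le_sq_div_of_mul_sq_le_of_le_mul (sub_pos.mpr hi) hlow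
    (re_inner_le_norm T φ)) _

theorem sum_re_inner_commutator_apply_le (hA : A.IsSymmetric) {B : E →ₗ[𝕜] E}
    (hB : B.IsSymmetric) (hv : Orthonormal 𝕜 v) (heig : ∀ i, A (v i) = (μ i : 𝕜) • v i)
    {Λ : ℝ} (hRR : ∀ φ, (∀ j, ⟪φ, v j⟫_𝕜 = 0) → Λ * ‖φ‖ ^ 2 ≤ re ⟪A φ, φ⟫_𝕜)
    (hμ : ∀ i, μ i < Λ) :
    ∑ i, re ⟪(A ∘ₗ B - B ∘ₗ A) (v i), B (v i)⟫_𝕜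
      ≤ ∑ i, ‖(A ∘ₗ B - B ∘ₗ A) (v i)‖ ^ 2 / (Λ - μ i) := by
  have hsymm : ∀ i j, ‖⟪v j, B (v i)⟫_𝕜‖ ^ 2 = ‖⟪v i, B (v j)⟫_𝕜‖ ^ 2 := fun i j => by
    rw [← hB, ← inner_conj_symm, RCLike.norm_conj]
  calc ∑ i, re ⟪(A ∘ₗ B - B ∘ₗ A) (v i), B (v i)⟫_𝕜
      ≤ ∑ i, (∑ j, (μ j - μ i) * ‖⟪v j, B (v i)⟫_𝕜‖ ^ 2
          + ‖(A ∘ₗ B - B ∘ₗ A) (v i)‖ ^ 2 / (Λ - μ i)) :=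
        Finset.sum_le_sum fun i _ => hA.re_inner_commutator_apply_le B hv heig hRR (hμ i)
    _ = ∑ i, ‖(A ∘ₗ B - B ∘ₗ A) (v i)‖ ^ 2 / (Λ - μ i) := by
        rw [Finset.sum_add_distrib, Finset.sum_sum_sub_mul_eq_zero_of_symm _ _ hsymm,
          zero_add]

end LinearMap.IsSymmetric

end

theorem stmt1_general
    {H : Type*} [NormedAddCommGroup H] [InnerProductSpace ℂ H]
    (A : H →ₗ[ℂ] H)
    (hAsymm : ∀ x y : H, ⟪A x, y⟫ = ⟪x, A y⟫)
    (u : ℕ → H) (lam : ℕ → ℝ)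
    (huon : ∀ i j : ℕ, 1 ≤ i → 1 ≤ j → ⟪u i, u j⟫ = if i = j then 1 else 0)
    (hmono : ∀ i j : ℕ, 1 ≤ i → i ≤ j → lam i ≤ lam j)
    (heig : ∀ i : ℕ, 1 ≤ i → A (u i) = (lam i : ℂ) • u i)
    (N : ℕ)
    (B : Fin N → H →ₗ[ℂ] H)
    (hBsymm : ∀ (k : Fin N) (x y : H), ⟪B k x, y⟫ = ⟪x, B k y⟫)
    (m : ℕ)
    (hRR : ∀ φ : H, (∀ j : ℕ, 1 ≤ j → j ≤ m → ⟪φ, u j⟫ = 0) →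
      lam (m + 1) * ‖φ‖ ^ 2 ≤ (⟪A φ, φ⟫).re)
    (hgap : lam m < lam (m + 1))
 :
    ∑ i ∈ Finset.Icc 1 m, (∑ k : Fin N, (⟪(A ∘ₗ B k - B k ∘ₗ A) (u i), B k (u i)⟫).re)
      ≤ ∑ i ∈ Finset.Icc 1 m, (∑ k : Fin N, ‖(A ∘ₗ B k - B k ∘ₗ A) (u i)‖ ^ 2) / (lam (m + 1) - lam i) := by
  set I := Finset.Icc 1 m
  have hI : ∀ i : I, 1 ≤ (i : ℕ) ∧ (i : ℕ) ≤ m := fun i => Finset.mem_Icc.mp i.2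
  have hv : Orthonormal ℂ (fun i : I => u i) := orthonormal_iff_ite.mpr fun i j => by
    rw [huon i j (hI i).1 (hI j).1]
    simp only [Subtype.ext_iff]
  have hRR' : ∀ φ, (∀ j : I, ⟪φ, u j⟫ = 0) → lam (m + 1) * ‖φ‖ ^ 2 ≤ (⟪A φ, φ⟫).re :=
    fun φ hφ => hRR φ fun j h1 h2 => hφ ⟨j, Finset.mem_Icc.mpr ⟨h1, h2⟩⟩
  have hlt : ∀ i : I, lam i < lam (m + 1) := fun i =>
    (hmono i m (hI i).1 (hI i).2).trans_lt hgap
  have hB_sum : ∀ k, ∑ i : I, (⟪(A ∘ₗ B k - B k ∘ₗ A) (u i), B k (u i)⟫).re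
      ≤ ∑ i : I, ‖(A ∘ₗ B k - B k ∘ₗ A) (u i)‖ ^ 2 / (lam (m + 1) - lam i) := fun k =>
    LinearMap.IsSymmetric.sum_re_inner_commutator_apply_le hAsymm (hBsymm k) hv
      (fun i => heig i (hI i).1) hRR' hlt
  simp only [← Finset.sum_coe_sort I, Finset.sum_div]
  exact Finset.sum_comm.trans_le
    ((Finset.sum_le_sum fun k _ => hB_sum k).trans_eq Finset.sum_comm)

theorem stmt1
    {H : Type*} [NormedAddCommGroup H] [InnerProductSpace ℂ H] [CompleteSpace H]
    (A : H →ₗ[ℂ] H)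
    (hAsymm : ∀ x y : H, ⟪A x, y⟫ = ⟪x, A y⟫)
    (u : ℕ → H) (lam : ℕ → ℝ)
    (huon : ∀ i j : ℕ, 1 ≤ i → 1 ≤ j → ⟪u i, u j⟫ = if i = j then 1 else 0)
    (hmono : ∀ i j : ℕ, 1 ≤ i → i ≤ j → lam i ≤ lam j)
    (heig : ∀ i : ℕ, 1 ≤ i → A (u i) = (lam i : ℂ) • u i)
    (N : ℕ) (hN : 1 ≤ N)
    (B : Fin N → H →ₗ[ℂ] H)
    (hBsymm : ∀ (k : Fin N) (x y : H), ⟪B k x, y⟫ = ⟪x, B k y⟫)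
    (m : ℕ) (hm : 1 ≤ m)
    (hRR : ∀ φ : H, (∀ j : ℕ, 1 ≤ j → j ≤ m → ⟪φ, u j⟫ = 0) →
      lam (m + 1) * ‖φ‖ ^ 2 ≤ (⟪A φ, φ⟫).re)
    (hgap : lam m < lam (m + 1))
 :
    ∑ i ∈ Finset.Icc 1 m, (∑ k : Fin N, (⟪(A ∘ₗ B k - B k ∘ₗ A) (u i), B k (u i)⟫).re)
      ≤ ∑ i ∈ Finset.Icc 1 m, (∑ k : Fin N, ‖(A ∘ₗ B k - B k ∘ₗ A) (u i)‖ ^ 2) / (lam (m + 1) - lam i) :=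
  stmt1_general A hAsymm u lam huon hmono heig N B hBsymm m hRR hgap
end

section
/- Under the stated abstract setting, Σ_{i=1}^m (λ_{m+1} − λ_i)² ρ_i ≤ Σ_{i=1}^m (λ_{m+1} − λ_i) Λ_i. -/
open scoped ComplexInnerProductSpace InnerProductSpace ComplexConjugate
open Finset RCLike

/-!
Fix `i ≤ m` and `k`, and split `v = Bₖ uᵢ` as `φ + ∑ⱼ ⟪uⱼ, v⟫ uⱼ` with `φ ⊥ u₁, …, uₘ`.
Since `[A, Bₖ] uᵢ = (A - λᵢ) v` and `ψ = (A - λᵢ) φ` is again orthogonal to the `uⱼ`,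
`Re ⟪[A, Bₖ] uᵢ, v⟫` and `‖[A, Bₖ] uᵢ‖²` are `Re ⟪ψ, φ⟫` resp. `‖ψ‖²` plus sums over `j ≤ m`
weighted by `λⱼ - λᵢ` resp. `(λⱼ - λᵢ)²`. Rayleigh–Ritz gives `(λₘ₊₁ - λᵢ) ‖φ‖² ≤ Re ⟪ψ, φ⟫`,
and with Cauchy–Schwarz `(λₘ₊₁ - λᵢ)² Re ⟪ψ, φ⟫ ≤ (λₘ₊₁ - λᵢ) ‖ψ‖²`. After summing over `i`
and `k` the leftover terms are `(λₘ₊₁ - λᵢ)(λₘ₊₁ - λⱼ)(λⱼ - λᵢ) |⟪uⱼ, Bₖ uᵢ⟫|²`, which are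
antisymmetric in `i, j` because `Bₖ` is symmetric, so they cancel.
-/

section OrthonormalFamily

variable {𝕜 E ι : Type*} [RCLike 𝕜] [NormedAddCommGroup E] [InnerProductSpace 𝕜 E]
  [DecidableEq ι] {s : Finset ι} {e : ι → E}

theorem inner_sum_smul_of_orthonormalOn
    (he : ∀ i ∈ s, ∀ j ∈ s, ⟪e i, e j⟫_𝕜 = if i = j then 1 else 0)
    {i : ι} (hi : i ∈ s) (c : ι → 𝕜) :
    ⟪e i, ∑ j ∈ s, c j • e j⟫_𝕜 = c i := by
  rw [inner_sum, sum_eq_single_of_mem i hi fun j hj hji => by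
    rw [inner_smul_right, he i hi j hj, if_neg hji.symm, mul_zero]]
  rw [inner_smul_right, he i hi i hi, if_pos rfl, mul_one]

theorem inner_sub_sum_inner_smul_of_orthonormalOn
    (he : ∀ i ∈ s, ∀ j ∈ s, ⟪e i, e j⟫_𝕜 = if i = j then 1 else 0)
    {i : ι} (hi : i ∈ s) (v : E) :
    ⟪e i, v - ∑ j ∈ s, ⟪e j, v⟫_𝕜 • e j⟫_𝕜 = 0 := by
  rw [inner_sub_right, inner_sum_smul_of_orthonormalOn he hi, sub_self]

theorem inner_add_sum_smul_of_orthonormalOn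
    (he : ∀ i ∈ s, ∀ j ∈ s, ⟪e i, e j⟫_𝕜 = if i = j then 1 else 0)
    {x y : E} (hx : ∀ j ∈ s, ⟪e j, x⟫_𝕜 = 0) (hy : ∀ j ∈ s, ⟪e j, y⟫_𝕜 = 0) (f g : ι → 𝕜) :
    ⟪x + ∑ j ∈ s, f j • e j, y + ∑ j ∈ s, g j • e j⟫_𝕜
      = ⟪x, y⟫_𝕜 + ∑ j ∈ s, conj (f j) * g j := by
  have hxe : ⟪x, ∑ j ∈ s, g j • e j⟫_𝕜 = 0 := by
    rw [inner_sum]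
    exact sum_eq_zero fun j hj => by
      rw [inner_smul_right, inner_eq_zero_symm.1 (hx j hj), mul_zero]
  have hey : ⟪∑ j ∈ s, f j • e j, y⟫_𝕜 = 0 := by
    rw [sum_inner]
    exact sum_eq_zero fun j hj => by rw [inner_smul_left, hy j hj, mul_zero]
  have hee : ⟪∑ j ∈ s, f j • e j, ∑ j ∈ s, g j • e j⟫_𝕜 = ∑ j ∈ s, conj (f j) * g j := by
    rw [sum_inner]
    exact sum_congr rfl fun j hj => by
      rw [inner_smul_left, inner_sum_smul_of_orthonormalOn he hj]
  rw [inner_add_left, inner_add_right, inner_add_right, hxe, hey, hee, add_zero, zero_add]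

end OrthonormalFamily

theorem sq_mul_re_inner_le_mul_norm_sq {𝕜 E : Type*} [RCLike 𝕜] [NormedAddCommGroup E]
    [InnerProductSpace 𝕜 E] {δ : ℝ} (hδ : 0 ≤ δ) {x y : E} (h : δ * ‖y‖ ^ 2 ≤ re ⟪x, y⟫_𝕜) :
    δ ^ 2 * re ⟪x, y⟫_𝕜 ≤ δ * ‖x‖ ^ 2 := by
  have hcs : re ⟪x, y⟫_𝕜 ≤ ‖x‖ * ‖y‖ := re_inner_le_norm x y
  nlinarith [norm_nonneg x, norm_nonneg y, mul_nonneg hδ (sq_nonneg (‖x‖ - δ * ‖y‖))]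

theorem sum_sum_eq_zero_of_antisymm {ι M : Type*} [AddCommGroup M] [IsAddTorsionFree M]
    (s : Finset ι) {f : ι → ι → M} (hf : ∀ i ∈ s, ∀ j ∈ s, f j i = -f i j) :
    ∑ i ∈ s, ∑ j ∈ s, f i j = 0 := by
  have h : ∑ i ∈ s, ∑ j ∈ s, f i j = -∑ i ∈ s, ∑ j ∈ s, f i j :=
    calc ∑ i ∈ s, ∑ j ∈ s, f i j = ∑ i ∈ s, ∑ j ∈ s, -f j i :=
          sum_congr rfl fun i hi => sum_congr rfl fun j hj => by rw [hf i hi j hj, neg_neg]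
      _ = -∑ i ∈ s, ∑ j ∈ s, f i j := by rw [sum_comm]; simp only [sum_neg_distrib]
  exact self_eq_neg.1 h

section SymmetricOperator

variable {𝕜 E ι : Type*} [RCLike 𝕜] [NormedAddCommGroup E] [InnerProductSpace 𝕜 E]
  [DecidableEq ι]

theorem commutator_apply_of_apply_eq_smul (A B : E →ₗ[𝕜] E) {u : E} {μ : 𝕜} (hu : A u = μ • u) :
    (A ∘ₗ B - B ∘ₗ A) u = A (B u) - μ • B u := by
  simp [hu]

theorem sq_gap_mul_re_inner_le_gap_mul_norm_sq (A : E →ₗ[𝕜] E)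
    (hA : ∀ x y : E, ⟪A x, y⟫_𝕜 = ⟪x, A y⟫_𝕜)
    {s : Finset ι} {e : ι → E} (he : ∀ i ∈ s, ∀ j ∈ s, ⟪e i, e j⟫_𝕜 = if i = j then 1 else 0)
    {lam : ι → ℝ} (heig : ∀ j ∈ s, A (e j) = (lam j : 𝕜) • e j) {Λ μ : ℝ} (hμ : μ ≤ Λ)
    (hRR : ∀ φ : E, (∀ j ∈ s, ⟪φ, e j⟫_𝕜 = 0) → Λ * ‖φ‖ ^ 2 ≤ re ⟪A φ, φ⟫_𝕜) (v : E) :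
    (Λ - μ) ^ 2 * (re ⟪A v - (μ : 𝕜) • v, v⟫_𝕜 - ∑ j ∈ s, (lam j - μ) * ‖⟪e j, v⟫_𝕜‖ ^ 2)
      ≤ (Λ - μ) * (‖A v - (μ : 𝕜) • v‖ ^ 2 - ∑ j ∈ s, (lam j - μ) ^ 2 * ‖⟪e j, v⟫_𝕜‖ ^ 2) := by
  set a : ι → 𝕜 := fun j => ⟪e j, v⟫_𝕜
  set φ := v - ∑ j ∈ s, a j • e j
  set ψ := A φ - (μ : 𝕜) • φ
  have hφ : ∀ j ∈ s, ⟪e j, φ⟫_𝕜 = 0 := fun j hj =>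
    inner_sub_sum_inner_smul_of_orthonormalOn he hj v
  have hψ : ∀ j ∈ s, ⟪e j, ψ⟫_𝕜 = 0 := fun j hj => by
    rw [inner_sub_right, inner_smul_right, ← hA, heig j hj, inner_smul_left, hφ j hj]
    simp
  have hv : v = φ + ∑ j ∈ s, a j • e j := (sub_add_cancel _ _).symm
  have hw : A v - (μ : 𝕜) • v = ψ + ∑ j ∈ s, (((lam j - μ : ℝ) : 𝕜) * a j) • e j := by
    have hAe : A (∑ j ∈ s, a j • e j) = ∑ j ∈ s, ((lam j : 𝕜) * a j) • e j :=
      (map_sum A _ s).trans <| sum_congr rfl fun j hj => by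
        rw [map_smul, heig j hj, smul_smul, mul_comm]
    have hsplit : ∑ j ∈ s, (((lam j - μ : ℝ) : 𝕜) * a j) • e j
        = ∑ j ∈ s, ((lam j : 𝕜) * a j) • e j - (μ : 𝕜) • ∑ j ∈ s, a j • e j := by
      rw [smul_sum, ← sum_sub_distrib]
      exact sum_congr rfl fun j _ => by push_cast; simp only [sub_mul, sub_smul, mul_smul]
    rw [hsplit, hv, map_add, hAe, smul_add]
    simp only [ψ]
    abel
  have hre : re ⟪A v - (μ : 𝕜) • v, v⟫_𝕜 = re ⟪ψ, φ⟫_𝕜 + ∑ j ∈ s, (lam j - μ) * ‖a j‖ ^ 2 := by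
    rw [hw, hv, inner_add_sum_smul_of_orthonormalOn he hψ hφ, map_add, map_sum]
    congr 1
    exact sum_congr rfl fun j _ => by
      rw [map_mul (starRingEnd 𝕜), conj_ofReal, mul_assoc, RCLike.conj_mul, ← ofReal_pow,
        ← ofReal_mul, ofReal_re]
  have hnorm : ‖A v - (μ : 𝕜) • v‖ ^ 2 = ‖ψ‖ ^ 2 + ∑ j ∈ s, (lam j - μ) ^ 2 * ‖a j‖ ^ 2 := by
    rw [@norm_sq_eq_re_inner 𝕜, @norm_sq_eq_re_inner 𝕜 _ _ _ _ ψ, hw,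
      inner_add_sum_smul_of_orthonormalOn he hψ hψ, map_add, map_sum]
    congr 1
    exact sum_congr rfl fun j _ => by
      rw [RCLike.conj_mul, ← ofReal_pow, ofReal_re, norm_mul, norm_ofReal, mul_pow, sq_abs]
  have hgap : (Λ - μ) * ‖φ‖ ^ 2 ≤ re ⟪ψ, φ⟫_𝕜 := by
    have hΛ := hRR φ fun j hj => inner_eq_zero_symm.1 (hφ j hj)
    rw [inner_sub_left, map_sub, inner_smul_real_left, smul_re, ← norm_sq_eq_re_inner]
    linarith
  rw [hre, hnorm, add_sub_cancel_right, add_sub_cancel_right]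
  exact sq_mul_re_inner_le_mul_norm_sq (sub_nonneg.2 hμ) hgap

end SymmetricOperator

theorem sum_sq_gap_mul_le_sum_gap_mul {ι : Type*} (s : Finset ι) (lam : ι → ℝ) (Λ : ℝ)
    {c : ι → ι → ℝ} (hc : ∀ i ∈ s, ∀ j ∈ s, c j i = c i j) {ρ L : ι → ℝ}
    (h : ∀ i ∈ s, (Λ - lam i) ^ 2 * (ρ i - ∑ j ∈ s, (lam j - lam i) * c i j)
      ≤ (Λ - lam i) * (L i - ∑ j ∈ s, (lam j - lam i) ^ 2 * c i j)) :
    ∑ i ∈ s, (Λ - lam i) ^ 2 * ρ i ≤ ∑ i ∈ s, (Λ - lam i) * L i := by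
  have hcross : ∑ i ∈ s, ∑ j ∈ s, ((Λ - lam i) ^ 2 * ((lam j - lam i) * c i j)
      - (Λ - lam i) * ((lam j - lam i) ^ 2 * c i j)) = 0 :=
    calc _ = ∑ i ∈ s, ∑ j ∈ s, (Λ - lam i) * (Λ - lam j) * (lam j - lam i) * c i j :=
          sum_congr rfl fun i _ => sum_congr rfl fun j _ => by ring
      _ = 0 := sum_sum_eq_zero_of_antisymm s fun i hi j hj => by rw [hc i hi j hj]; ring
  have hsum := sum_le_sum h
  simp only [mul_sub, mul_sum, sum_sub_distrib] at hsum hcross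
  linarith

theorem stmt2_general
    {H : Type*} [NormedAddCommGroup H] [InnerProductSpace ℂ H]
    (A : H →ₗ[ℂ] H)
    (hAsymm : ∀ x y : H, ⟪A x, y⟫ = ⟪x, A y⟫)
    (u : ℕ → H) (lam : ℕ → ℝ)
    (huon : ∀ i j : ℕ, 1 ≤ i → 1 ≤ j → ⟪u i, u j⟫ = if i = j then 1 else 0)
    (hmono : ∀ i j : ℕ, 1 ≤ i → i ≤ j → lam i ≤ lam j)
    (heig : ∀ i : ℕ, 1 ≤ i → A (u i) = (lam i : ℂ) • u i)
    (N : ℕ)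
    (B : Fin N → H →ₗ[ℂ] H)
    (hBsymm : ∀ (k : Fin N) (x y : H), ⟪B k x, y⟫ = ⟪x, B k y⟫)
    (m : ℕ)
    (hRR : ∀ φ : H, (∀ j : ℕ, 1 ≤ j → j ≤ m → ⟪φ, u j⟫ = 0) →
      lam (m + 1) * ‖φ‖ ^ 2 ≤ (⟪A φ, φ⟫).re)
 :
    ∑ i ∈ Finset.Icc 1 m, (lam (m + 1) - lam i) ^ 2 * (∑ k : Fin N, (⟪(A ∘ₗ B k - B k ∘ₗ A) (u i), B k (u i)⟫).re)
      ≤ ∑ i ∈ Finset.Icc 1 m, (lam (m + 1) - lam i) * (∑ k : Fin N, ‖(A ∘ₗ B k - B k ∘ₗ A) (u i)‖ ^ 2) := by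
  have hon : ∀ i ∈ Icc 1 m, ∀ j ∈ Icc 1 m, ⟪u i, u j⟫ = if i = j then 1 else 0 :=
    fun i hi j hj => huon i j (mem_Icc.1 hi).1 (mem_Icc.1 hj).1
  have heig_on : ∀ j ∈ Icc 1 m, A (u j) = (lam j : ℂ) • u j := fun j hj => heig j (mem_Icc.1 hj).1
  have hRR_on : ∀ φ : H, (∀ j ∈ Icc 1 m, ⟪φ, u j⟫ = 0) → lam (m + 1) * ‖φ‖ ^ 2 ≤ re ⟪A φ, φ⟫ :=
    fun φ hφ => hRR φ fun j h1 h2 => hφ j (mem_Icc.2 ⟨h1, h2⟩)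
  refine sum_sq_gap_mul_le_sum_gap_mul _ lam _ (c := fun i j => ∑ k, ‖⟪u j, B k (u i)⟫‖ ^ 2)
    (fun i _ j _ => sum_congr rfl fun k _ => ?_) fun i hi => ?_
  · rw [← hBsymm, ← inner_conj_symm, RCLike.norm_conj]
  · have hi1 := (mem_Icc.1 hi).1
    have hkey := fun k => sq_gap_mul_re_inner_le_gap_mul_norm_sq A hAsymm hon heig_on
      (hmono i (m + 1) hi1 ((mem_Icc.1 hi).2.trans m.le_succ)) hRR_on (B k (u i))
    simp only [commutator_apply_of_apply_eq_smul _ _ (heig i hi1)]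
    have hsum := sum_le_sum fun k (_ : k ∈ univ) => hkey k
    simp only [mul_sub, mul_sum, sum_sub_distrib] at hsum ⊢
    rwa [sum_comm (s := Icc 1 m), sum_comm (s := Icc 1 m)]

theorem stmt2
    {H : Type*} [NormedAddCommGroup H] [InnerProductSpace ℂ H] [CompleteSpace H]
    (A : H →ₗ[ℂ] H)
    (hAsymm : ∀ x y : H, ⟪A x, y⟫ = ⟪x, A y⟫)
    (u : ℕ → H) (lam : ℕ → ℝ)
    (huon : ∀ i j : ℕ, 1 ≤ i → 1 ≤ j → ⟪u i, u j⟫ = if i = j then 1 else 0)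
    (hmono : ∀ i j : ℕ, 1 ≤ i → i ≤ j → lam i ≤ lam j)
    (heig : ∀ i : ℕ, 1 ≤ i → A (u i) = (lam i : ℂ) • u i)
    (N : ℕ) (hN : 1 ≤ N)
    (B : Fin N → H →ₗ[ℂ] H)
    (hBsymm : ∀ (k : Fin N) (x y : H), ⟪B k x, y⟫ = ⟪x, B k y⟫)
    (m : ℕ) (hm : 1 ≤ m)
    (hRR : ∀ φ : H, (∀ j : ℕ, 1 ≤ j → j ≤ m → ⟪φ, u j⟫ = 0) →
      lam (m + 1) * ‖φ‖ ^ 2 ≤ (⟪A φ, φ⟫).re)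
 :
    ∑ i ∈ Finset.Icc 1 m, (lam (m + 1) - lam i) ^ 2 * (∑ k : Fin N, (⟪(A ∘ₗ B k - B k ∘ₗ A) (u i), B k (u i)⟫).re)
      ≤ ∑ i ∈ Finset.Icc 1 m, (lam (m + 1) - lam i) * (∑ k : Fin N, ‖(A ∘ₗ B k - B k ∘ₗ A) (u i)‖ ^ 2) :=
  stmt2_general A hAsymm u lam huon hmono heig N B hBsymm m hRR
end

section
/- Under the stated abstract setting, if λ_m < λ_{m+1}, then for every real number p ≤ 2 one has Σ_{i=1}^m (λ_{m+1} − λ_i)^p ρ_i ≤ Σ_{i=1}^m (λ_{m+1} − λ_i)^{p−1} Λ_i, where the powers are real powers of the positive numbers λ_{m+1} − λ_i. -/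
open scoped ComplexInnerProductSpace

/-!
Write `δᵢ = μ - λᵢ`, so that `[A, B] uᵢ = (A - λᵢ) (B uᵢ)`. Split `b = B uᵢ` as `P + φ` with `P` in
the span of the `uⱼ` and `φ` orthogonal to them; as `A` is symmetric and the `uⱼ` are eigenvectors,
`A` preserves both parts, so `δᵢ Re⟨(A - λᵢ)b, b⟩ - ‖(A - λᵢ)b‖² = Re⟨(A - λᵢ)b, (μ - A)b⟩` splits
into a `P`-part and a `φ`-part. The `φ`-part is `≤ 0` by the Rayleigh–Ritz property, hence
`δᵢ Re⟨[A, B]uᵢ, Buᵢ⟩ - ‖[A, B]uᵢ‖² ≤ Σⱼ (δᵢ - δⱼ) δⱼ |⟨uⱼ, Buᵢ⟩|²`.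
Weighting by `δᵢ^(p-1)` and summing over `i` and `B = Bₖ` leaves `Σᵢⱼ δᵢ^(p-2) (δᵢ - δⱼ) δᵢδⱼ wᵢⱼ`
with `wᵢⱼ = Σₖ |⟨uⱼ, Bₖuᵢ⟩|²` symmetric (the `Bₖ` are symmetric), and symmetrizing in `(i, j)`
shows that this is `≤ 0` because `t ↦ t^(p-2)` is antitone for `p ≤ 2`.
-/

open Finset

theorem re_inner_sub_smul_smul_sub_nonpos {𝕜 E : Type*} [RCLike 𝕜] [SeminormedAddCommGroup E]
    [InnerProductSpace 𝕜 E] {x φ : E} {c μ : ℝ} (hc : c ≤ μ)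
    (h : μ * ‖φ‖ ^ 2 ≤ RCLike.re (inner 𝕜 x φ)) :
    RCLike.re (inner 𝕜 (x - (c : 𝕜) • φ) ((μ : 𝕜) • φ - x)) ≤ 0 := by
  have hsq := norm_sub_sq (𝕜 := 𝕜) x ((μ : 𝕜) • φ)
  rw [inner_smul_right, RCLike.re_ofReal_mul, norm_smul, RCLike.norm_ofReal, mul_pow, sq_abs] at hsq
  simp only [inner_sub_left, inner_sub_right, inner_smul_left, inner_smul_right, RCLike.conj_ofReal,
    map_sub, RCLike.re_ofReal_mul, inner_self_eq_norm_sq, inner_re_symm φ x]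
  -- `-Re⟨x - cφ, μφ - x⟩ = ‖x - μφ‖² + (μ - c) (Re⟨x, φ⟩ - μ‖φ‖²)`
  nlinarith [sq_nonneg ‖x - (μ : 𝕜) • φ‖, mul_le_mul_of_nonneg_left h (sub_nonneg.2 hc)]

theorem Antivary.sum_sum_mul_sub_mul_nonpos {ι : Type*} [Fintype ι] {f d : ι → ℝ}
    (hfd : Antivary f d) {W : ι → ι → ℝ} (hW : ∀ i j, W i j = W j i) (hW₀ : ∀ i j, 0 ≤ W i j) :
    ∑ i, ∑ j, f i * (d i - d j) * W i j ≤ 0 := by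
  have hswap : ∑ i, ∑ j, f i * (d i - d j) * W i j = ∑ i, ∑ j, f j * (d j - d i) * W j i :=
    sum_comm
  have hpair : ∑ i, ∑ j, (f i * (d i - d j) * W i j + f j * (d j - d i) * W j i) ≤ 0 := by
    refine sum_nonpos fun i _ => sum_nonpos fun j _ => ?_
    calc _ = (f j - f i) * (d j - d i) * W i j := by rw [← hW i j]; ring
      _ ≤ 0 := mul_nonpos_of_nonpos_of_nonneg (hfd.sub_mul_sub_nonpos i j) (hW₀ i j)
  simp only [sum_add_distrib, ← hswap] at hpair
  linarith

theorem sum_smul_inner_eq_zero {𝕜 E ι : Type*} [RCLike 𝕜] [SeminormedAddCommGroup E]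
    [InnerProductSpace 𝕜 E] {u : ι → E} {v : E} (hv : ∀ j, inner 𝕜 (u j) v = 0) (s : Finset ι)
    (l : ι → 𝕜) : inner 𝕜 (∑ j ∈ s, l j • u j) v = 0 := by
  simp only [sum_inner, inner_smul_left, hv, mul_zero, sum_const_zero]

section

variable {H : Type*} [NormedAddCommGroup H] [InnerProductSpace ℂ H] {ι : Type*} [Fintype ι]
  {A : H →ₗ[ℂ] H} {u : ι → H} {lam : ι → ℝ} {μ : ℝ}

theorem Orthonormal.re_inner_sum_ofReal_mul_smul (hu : Orthonormal ℂ u) (r s : ι → ℝ)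
    (a : ι → ℂ) :
    (⟪∑ j, ((r j : ℂ) * a j) • u j, ∑ j, ((s j : ℂ) * a j) • u j⟫).re
      = ∑ j, r j * s j * ‖a j‖ ^ 2 := by
  rw [hu.inner_sum, Complex.re_sum]
  refine sum_congr rfl fun j _ => ?_
  rw [map_mul, Complex.conj_ofReal, mul_mul_mul_comm, Complex.conj_mul', ← Complex.ofReal_mul,
    ← Complex.ofReal_pow, ← Complex.ofReal_mul, Complex.ofReal_re]

theorem inner_map_eq_zero_of_eigen (hA : A.IsSymmetric) {w φ : H} {l : ℂ} (hw : A w = l • w)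
    (hφ : ⟪w, φ⟫ = 0) : ⟪w, A φ⟫ = 0 := by
  rw [← hA, hw, inner_smul_left, hφ, mul_zero]

theorem sub_smul_sum_smul_of_eigen (heig : ∀ j, A (u j) = (lam j : ℂ) • u j) (c : ℝ)
    (a : ι → ℂ) :
    A (∑ j, a j • u j) - (c : ℂ) • ∑ j, a j • u j = ∑ j, ((lam j - c : ℝ) * a j) • u j := by
  simp only [map_sum, map_smul, heig, smul_sum, smul_smul, ← sum_sub_distrib, ← sub_smul]
  refine sum_congr rfl fun j _ => ?_
  push_cast
  ring_nf

theorem gap_mul_re_inner_sub_norm_sq_le_of_eq_add (hA : A.IsSymmetric) (hu : Orthonormal ℂ u)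
    (heig : ∀ j, A (u j) = (lam j : ℂ) • u j) {c : ℝ} (hc : c ≤ μ) {a : ι → ℂ} {b φ : H}
    (hb : b = ∑ j, a j • u j + φ) (hφ : ∀ j, ⟪u j, φ⟫ = 0)
    (hφμ : μ * ‖φ‖ ^ 2 ≤ (⟪A φ, φ⟫).re) :
    (μ - c) * (⟪A b - (c : ℂ) • b, b⟫).re - ‖A b - (c : ℂ) • b‖ ^ 2
      ≤ ∑ j, (lam j - c) * (μ - lam j) * ‖a j‖ ^ 2 := by
  set P := ∑ j, a j • u j
  set ψ := A φ - (c : ℂ) • φ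
  set ζ := (μ : ℂ) • φ - A φ
  set X := ∑ j, ((lam j - c : ℝ) * a j) • u j
  set Y := ∑ j, ((μ - lam j : ℝ) * a j) • u j
  have hAφ : ∀ j, ⟪u j, A φ⟫ = 0 := fun j => inner_map_eq_zero_of_eigen hA (heig j) (hφ j)
  have hψ : ∀ j, ⟪u j, ψ⟫ = 0 := fun j => by
    simp only [ψ, inner_sub_right, inner_smul_right, hφ, hAφ, mul_zero, sub_zero]
  have hζ : ∀ j, ⟪u j, ζ⟫ = 0 := fun j => by
    simp only [ζ, inner_sub_right, inner_smul_right, hφ, hAφ, mul_zero, sub_zero]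
  have hX : A b - (c : ℂ) • b = X + ψ := by
    have hAP : A P - (c : ℂ) • P = X := sub_smul_sum_smul_of_eigen heig c a
    rw [← hAP, hb]
    simp only [ψ, map_add, smul_add]
    abel
  have hY : ((μ - c : ℝ) : ℂ) • b - (A b - (c : ℂ) • b) = Y + ζ := by
    have hPY : ((μ - c : ℝ) : ℂ) • P - X = Y := by
      simp only [P, X, Y, smul_sum, smul_smul, ← sum_sub_distrib, ← sub_smul]
      exact sum_congr rfl fun j _ => by push_cast; ring_nf
    rw [hX, hb, smul_add, ← hPY]
    simp only [ψ, ζ, Complex.ofReal_sub, sub_smul]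
    abel
  have hψζ : (⟪ψ, ζ⟫).re ≤ 0 := by
    simpa only [RCLike.re_to_complex, RCLike.ofReal_eq_complex_ofReal] using
      re_inner_sub_smul_smul_sub_nonpos (𝕜 := ℂ) hc hφμ
  have hexpand : (μ - c) * (⟪A b - (c : ℂ) • b, b⟫).re - ‖A b - (c : ℂ) • b‖ ^ 2
      = (⟪A b - (c : ℂ) • b, ((μ - c : ℝ) : ℂ) • b - (A b - (c : ℂ) • b)⟫).re := by
    simp only [inner_sub_right, inner_smul_right, Complex.sub_re, Complex.re_ofReal_mul,
      ← inner_self_eq_norm_sq (𝕜 := ℂ), RCLike.re_to_complex]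
  rw [hexpand, hY]
  nth_rw 1 [hX]
  rw [inner_add_left, inner_add_right, inner_add_right, sum_smul_inner_eq_zero hζ,
    inner_eq_zero_symm.1 (sum_smul_inner_eq_zero hψ _ _), add_zero, zero_add, Complex.add_re,
    hu.re_inner_sum_ofReal_mul_smul (fun j => lam j - c) (fun j => μ - lam j) a]
  linarith

theorem gap_mul_re_inner_sub_norm_sq_le (hA : A.IsSymmetric) (hu : Orthonormal ℂ u)
    (heig : ∀ j, A (u j) = (lam j : ℂ) • u j)
    (hRR : ∀ φ : H, (∀ j, ⟪φ, u j⟫ = 0) → μ * ‖φ‖ ^ 2 ≤ (⟪A φ, φ⟫).re)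
    {c : ℝ} (hc : c ≤ μ) (b : H) :
    (μ - c) * (⟪A b - (c : ℂ) • b, b⟫).re - ‖A b - (c : ℂ) • b‖ ^ 2
      ≤ ∑ j, (lam j - c) * (μ - lam j) * ‖⟪u j, b⟫‖ ^ 2 := by
  set φ := b - ∑ j, ⟪u j, b⟫ • u j
  have hφ : ∀ j, ⟪u j, φ⟫ = 0 := fun j => by
    rw [inner_sub_right, hu.inner_right_fintype, sub_self]
  exact gap_mul_re_inner_sub_norm_sq_le_of_eq_add hA hu heig hc (add_sub_cancel _ b).symm hφ
    (hRR φ fun j => inner_eq_zero_symm.1 (hφ j))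

theorem gap_mul_sum_re_inner_commutator_sub_le (hA : A.IsSymmetric) (hu : Orthonormal ℂ u)
    (heig : ∀ j, A (u j) = (lam j : ℂ) • u j)
    (hRR : ∀ φ : H, (∀ j, ⟪φ, u j⟫ = 0) → μ * ‖φ‖ ^ 2 ≤ (⟪A φ, φ⟫).re)
    {κ : Type*} [Fintype κ] (B : κ → H →ₗ[ℂ] H) {i : ι} (hi : lam i ≤ μ) :
    (μ - lam i) * ∑ k, (⟪(A ∘ₗ B k - B k ∘ₗ A) (u i), B k (u i)⟫).re
        - ∑ k, ‖(A ∘ₗ B k - B k ∘ₗ A) (u i)‖ ^ 2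
      ≤ ∑ j, (lam j - lam i) * (μ - lam j) * ∑ k, ‖⟪u j, B k (u i)⟫‖ ^ 2 := by
  have hcomm (k : κ) : (A ∘ₗ B k - B k ∘ₗ A) (u i) = A (B k (u i)) - (lam i : ℂ) • B k (u i) := by
    simp only [LinearMap.sub_apply, LinearMap.comp_apply, heig, map_smul]
  calc _ = ∑ k, ((μ - lam i) * (⟪A (B k (u i)) - (lam i : ℂ) • B k (u i), B k (u i)⟫).re
          - ‖A (B k (u i)) - (lam i : ℂ) • B k (u i)‖ ^ 2) := by
        simp only [hcomm, mul_sum, sum_sub_distrib]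
    _ ≤ ∑ k, ∑ j, (lam j - lam i) * (μ - lam j) * ‖⟪u j, B k (u i)⟫‖ ^ 2 :=
        sum_le_sum fun k _ => gap_mul_re_inner_sub_norm_sq_le hA hu heig hRR hi _
    _ = _ := by
        rw [sum_comm]
        simp only [mul_sum]

theorem sum_gap_rpow_mul_re_inner_commutator_le (hA : A.IsSymmetric) (hu : Orthonormal ℂ u)
    (heig : ∀ j, A (u j) = (lam j : ℂ) • u j)
    (hRR : ∀ φ : H, (∀ j, ⟪φ, u j⟫ = 0) → μ * ‖φ‖ ^ 2 ≤ (⟪A φ, φ⟫).re)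
    (hgap : ∀ i, lam i < μ) {κ : Type*} [Fintype κ] {B : κ → H →ₗ[ℂ] H}
    (hB : ∀ k, (B k).IsSymmetric) {p : ℝ} (hp : p ≤ 2) :
    ∑ i, (μ - lam i) ^ p * ∑ k, (⟪(A ∘ₗ B k - B k ∘ₗ A) (u i), B k (u i)⟫).re
      ≤ ∑ i, (μ - lam i) ^ (p - 1) * ∑ k, ‖(A ∘ₗ B k - B k ∘ₗ A) (u i)‖ ^ 2 := by
  set δ : ι → ℝ := fun i => μ - lam i
  have hδ : ∀ i, 0 < δ i := fun i => sub_pos.2 (hgap i)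
  set w : ι → ι → ℝ := fun i j => ∑ k, ‖⟪u j, B k (u i)⟫‖ ^ 2
  have hw : ∀ i j, w i j = w j i := fun i j => sum_congr rfl fun k _ => by
    rw [← hB k, ← inner_conj_symm, RCLike.norm_conj]
  have hanti : Antivary (fun i => δ i ^ (p - 2)) δ := fun i j hij =>
    Real.rpow_le_rpow_of_nonpos (hδ i) hij.le (by linarith)
  rw [← sub_nonpos, ← sum_sub_distrib]
  calc _ = ∑ i, δ i ^ (p - 2) * (δ i * (δ i * ∑ k, (⟪(A ∘ₗ B k - B k ∘ₗ A) (u i), B k (u i)⟫).re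
            - ∑ k, ‖(A ∘ₗ B k - B k ∘ₗ A) (u i)‖ ^ 2)) := by
        refine sum_congr rfl fun i _ => ?_
        have h1 : δ i ^ (p - 1) = δ i ^ (p - 2) * δ i := by
          rw [← Real.rpow_add_one (hδ i).ne']; ring_nf
        have h2 : δ i ^ p = δ i ^ (p - 1) * δ i := by
          rw [← Real.rpow_add_one (hδ i).ne', sub_add_cancel]
        rw [h2, h1]
        ring
    _ ≤ ∑ i, δ i ^ (p - 2) * (δ i * ∑ j, (δ i - δ j) * δ j * w i j) := by
        refine sum_le_sum fun i _ => mul_le_mul_of_nonneg_left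
          (mul_le_mul_of_nonneg_left ?_ (hδ i).le) (Real.rpow_nonneg (hδ i).le _)
        simpa only [δ, w, sub_sub_sub_cancel_left] using
          gap_mul_sum_re_inner_commutator_sub_le hA hu heig hRR B (hgap i).le
    _ = ∑ i, ∑ j, δ i ^ (p - 2) * (δ i - δ j) * (δ i * δ j * w i j) := by
        simp only [mul_sum]
        exact sum_congr rfl fun i _ => sum_congr rfl fun j _ => by ring
    _ ≤ 0 := hanti.sum_sum_mul_sub_mul_nonpos (fun i j => by rw [hw, mul_comm (δ i)])
        fun i j => mul_nonneg (mul_nonneg (hδ i).le (hδ j).le) (sum_nonneg fun k _ => by positivity)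

end

theorem stmt4_general
    {H : Type*} [NormedAddCommGroup H] [InnerProductSpace ℂ H]
    (A : H →ₗ[ℂ] H)
    (hAsymm : ∀ x y : H, ⟪A x, y⟫ = ⟪x, A y⟫)
    (u : ℕ → H) (lam : ℕ → ℝ)
    (huon : ∀ i j : ℕ, 1 ≤ i → 1 ≤ j → ⟪u i, u j⟫ = if i = j then 1 else 0)
    (hmono : ∀ i j : ℕ, 1 ≤ i → i ≤ j → lam i ≤ lam j)
    (heig : ∀ i : ℕ, 1 ≤ i → A (u i) = (lam i : ℂ) • u i)
    (N : ℕ)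
    (B : Fin N → H →ₗ[ℂ] H)
    (hBsymm : ∀ (k : Fin N) (x y : H), ⟪B k x, y⟫ = ⟪x, B k y⟫)
    (m : ℕ)
    (hRR : ∀ φ : H, (∀ j : ℕ, 1 ≤ j → j ≤ m → ⟪φ, u j⟫ = 0) →
      lam (m + 1) * ‖φ‖ ^ 2 ≤ (⟪A φ, φ⟫).re)
    (hgap : lam m < lam (m + 1))

    (p : ℝ) (hp : p ≤ 2) :
    ∑ i ∈ Finset.Icc 1 m, (lam (m + 1) - lam i) ^ p * (∑ k : Fin N, (⟪(A ∘ₗ B k - B k ∘ₗ A) (u i), B k (u i)⟫).re)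
      ≤ ∑ i ∈ Finset.Icc 1 m, (lam (m + 1) - lam i) ^ (p - 1) * (∑ k : Fin N, ‖(A ∘ₗ B k - B k ∘ₗ A) (u i)‖ ^ 2) := by
  have hu : Orthonormal ℂ fun j : Icc 1 m => u j := orthonormal_iff_ite.2 fun i j => by
    simpa only [Subtype.ext_iff] using huon i j (mem_Icc.1 i.2).1 (mem_Icc.1 j.2).1
  have hgap' : ∀ i : Icc 1 m, lam i < lam (m + 1) := fun i =>
    (hmono i m (mem_Icc.1 i.2).1 (mem_Icc.1 i.2).2).trans_lt hgap
  rw [← sum_coe_sort (Icc 1 m), ← sum_coe_sort (Icc 1 m)]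
  exact sum_gap_rpow_mul_re_inner_commutator_le (lam := fun j : Icc 1 m => lam j) hAsymm hu
    (fun j => heig j (mem_Icc.1 j.2).1)
    (fun φ hφ => hRR φ fun j hj hjm => hφ ⟨j, mem_Icc.2 ⟨hj, hjm⟩⟩) hgap' hBsymm hp

theorem stmt4
    {H : Type*} [NormedAddCommGroup H] [InnerProductSpace ℂ H] [CompleteSpace H]
    (A : H →ₗ[ℂ] H)
    (hAsymm : ∀ x y : H, ⟪A x, y⟫ = ⟪x, A y⟫)
    (u : ℕ → H) (lam : ℕ → ℝ)
    (huon : ∀ i j : ℕ, 1 ≤ i → 1 ≤ j → ⟪u i, u j⟫ = if i = j then 1 else 0)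
    (hmono : ∀ i j : ℕ, 1 ≤ i → i ≤ j → lam i ≤ lam j)
    (heig : ∀ i : ℕ, 1 ≤ i → A (u i) = (lam i : ℂ) • u i)
    (N : ℕ) (hN : 1 ≤ N)
    (B : Fin N → H →ₗ[ℂ] H)
    (hBsymm : ∀ (k : Fin N) (x y : H), ⟪B k x, y⟫ = ⟪x, B k y⟫)
    (m : ℕ) (hm : 1 ≤ m)
    (hRR : ∀ φ : H, (∀ j : ℕ, 1 ≤ j → j ≤ m → ⟪φ, u j⟫ = 0) →
      lam (m + 1) * ‖φ‖ ^ 2 ≤ (⟪A φ, φ⟫).re)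
    (hgap : lam m < lam (m + 1))

    (p : ℝ) (hp : p ≤ 2) :
    ∑ i ∈ Finset.Icc 1 m, (lam (m + 1) - lam i) ^ p * (∑ k : Fin N, (⟪(A ∘ₗ B k - B k ∘ₗ A) (u i), B k (u i)⟫).re)
      ≤ ∑ i ∈ Finset.Icc 1 m, (lam (m + 1) - lam i) ^ (p - 1) * (∑ k : Fin N, ‖(A ∘ₗ B k - B k ∘ₗ A) (u i)‖ ^ 2) :=
  stmt4_general A hAsymm u lam huon hmono heig N B hBsymm m hRR hgap p hp
end
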